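/- arXiv:0805.4144 — 3 statements merged into one kernel-verified Lean document; each statement's English description precedes it below -/
import Mathlib

section
/- Let f, g₁, …, g_{n-1} : ℝⁿ → ℝ be Lipschitz functions and set ω = f dg₁ ∧ ⋯ ∧ dg_{n-1}, defined almost everywhere via Rademacher's theorem. Then the weak exterior derivative of ω exists and equals df ∧ dg₁ ∧ ⋯ ∧ dg_{n-1}; that is, for every smooth compactly supported function φ, ∫ φ · (df ∧ dg₁ ∧ ⋯ ∧ dg_{n-1}) = −∫ dφ ∧ ω. -/
open MeasureTheory Filter Topology
open scoped ContDiff Convolution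

set_option maxHeartbeats 2000000

section Helpers

theorem my_one_le_inf : (1 : WithTop ℕ∞) ≤ ∞ := by norm_num

theorem my_two_le_inf : (2 : WithTop ℕ∞) ≤ ∞ := by
  rw [show (2 : WithTop ℕ∞) = ((2 : ℕ∞) : WithTop ℕ∞) from rfl]
  exact WithTop.coe_le_coe.2 le_top

theorem my_inf_add_one_le : (∞ + 1 : WithTop ℕ∞) ≤ ∞ := by norm_num

theorem lip_fderiv_bound {m : ℕ} {u : EuclideanSpace ℝ (Fin m) → ℝ} {L : NNReal}
    (hu : LipschitzWith L u) (x : EuclideanSpace ℝ (Fin m)) (j : Fin m) :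
    ‖fderiv ℝ u x (EuclideanSpace.single j 1)‖ ≤ L := by
  calc ‖fderiv ℝ u x (EuclideanSpace.single j 1)‖
      ≤ ‖fderiv ℝ u x‖ * ‖EuclideanSpace.single j (1:ℝ)‖ := (fderiv ℝ u x).le_opNorm _
    _ ≤ (L : ℝ) * 1 := by
        apply mul_le_mul (norm_fderiv_le_of_lipschitz ℝ hu) _ (norm_nonneg _) L.coe_nonneg
        rw [EuclideanSpace.norm_single]; simp
    _ = (L : ℝ) := mul_one _

theorem my_contDiff_prod {E : Type*} [NormedAddCommGroup E] [NormedSpace ℝ E] {ι : Type*}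
    (s : Finset ι) (f : ι → E → ℝ) (h : ∀ i ∈ s, ContDiff ℝ ∞ (f i)) :
    ContDiff ℝ ∞ (fun x => ∏ i ∈ s, f i x) := by
  classical
  induction s using Finset.cons_induction with
  | empty => simpa using contDiff_const
  | cons a s ha ih =>
    simp only [Finset.prod_cons]
    exact (h a (Finset.mem_cons_self a s)).mul (ih fun i hi => h i (Finset.mem_cons_of_mem hi))

/-- Expansion of the special determinants appearing in the statement. -/
theorem det_expand {n : ℕ} (a : Fin (n + 1) → ℝ) (b : Fin n → Fin (n + 1) → ℝ) (c : ℝ) :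
    c * Matrix.det (Matrix.of fun i j : Fin (n + 1) =>
        Fin.cases (a j) (fun i' => b i' j) i)
      = ∑ σ : Equiv.Perm (Fin (n + 1)),
          ((Equiv.Perm.sign σ : ℤ) : ℝ) * (a (σ 0) * (c * ∏ i : Fin n, b i (σ i.succ))) := by
  rw [← Matrix.det_transpose, Matrix.det_apply', Finset.mul_sum]
  congr 1
  ext σ
  rw [Fin.prod_univ_succ]
  simp only [Matrix.transpose_apply, Matrix.of_apply, Fin.cases_zero, Fin.cases_succ]
  ring

/-- A bound for the determinants in terms of rowwise entry bounds. -/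
theorem det_abs_le {m : ℕ} (M : Matrix (Fin m) (Fin m) ℝ) (c : Fin m → ℝ)
    (hc : ∀ i, 0 ≤ c i) (h : ∀ i j, |M i j| ≤ c i) :
    |M.det| ≤ (Finset.univ : Finset (Equiv.Perm (Fin m))).card * ∏ i, c i := by
  classical
  rw [Matrix.det_apply']
  calc |∑ σ : Equiv.Perm (Fin m), ((Equiv.Perm.sign σ : ℤ) : ℝ) * ∏ i, M (σ i) i|
      ≤ ∑ σ : Equiv.Perm (Fin m), |((Equiv.Perm.sign σ : ℤ) : ℝ) * ∏ i, M (σ i) i| :=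
        Finset.abs_sum_le_sum_abs _ _
    _ ≤ ∑ _σ : Equiv.Perm (Fin m), ∏ i, c i := by
        apply Finset.sum_le_sum
        intro σ _
        have hsgn : |((Equiv.Perm.sign σ : ℤ) : ℝ)| = 1 := by
          rcases Int.units_eq_one_or (Equiv.Perm.sign σ) with h1 | h1 <;> rw [h1] <;> norm_num
        rw [abs_mul, hsgn, one_mul, Finset.abs_prod]
        calc ∏ i, |M (σ i) i| ≤ ∏ i, c (σ i) :=
              Finset.prod_le_prod (fun i _ => abs_nonneg _) (fun i _ => h (σ i) i)
          _ = ∏ i, c i := Equiv.prod_comp σ c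
    _ = (Finset.univ : Finset (Equiv.Perm (Fin m))).card * ∏ i, c i := by
        rw [Finset.sum_const, nsmul_eq_mul]

/-- Measurability of determinants with measurable entries. -/
theorem det_meas {m : ℕ} {α : Type*} [MeasurableSpace α] (A : α → Matrix (Fin m) (Fin m) ℝ)
    (h : ∀ i j, Measurable fun x => A x i j) : Measurable fun x => (A x).det := by
  classical
  simp only [Matrix.det_apply']
  apply Finset.measurable_sum
  intro σ _
  apply Measurable.const_mul
  apply Finset.measurable_prod
  intro i _
  exact h (σ i) i

end Helpers

section ByParts

/-- Integration by parts for a Lipschitz function against a smooth compactly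
supported function, in a fixed direction, via difference quotients. -/
theorem lip_int_by_parts {m : ℕ} {u : EuclideanSpace ℝ (Fin m) → ℝ} {Lu : NNReal}
    (hu : LipschitzWith Lu u) {w : EuclideanSpace ℝ (Fin m) → ℝ}
    (hw : ContDiff ℝ ∞ w) (hwc : HasCompactSupport w) (v : EuclideanSpace ℝ (Fin m)) :
    ∫ x, (fderiv ℝ u x v) * w x = - ∫ x, u x * (fderiv ℝ w x v) := by
  obtain ⟨Lw, hLw⟩ : ∃ C, LipschitzWith C w :=
    hw.lipschitzWith_of_hasCompactSupport hwc (by simp)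
  have hucont := hu.continuous
  have hwcont := hw.continuous
  -- the exact identity for difference quotients
  have key : ∀ t : ℝ, t ≠ 0 →
      ∫ x, u x * ((w (x + t • v) - w x) / t) = ∫ x, ((u (x - t • v) - u x) / t) * w x := by
    intro t ht
    have hshift : ∫ x, u (x - t • v) * w x = ∫ x, u x * w (x + t • v) := by
      have := integral_add_right_eq_self (μ := volume)
        (fun x => u (x - t • v) * w x) (t • v)
      simp only [add_sub_cancel_right] at this
      exact this.symm
    have i1 : Integrable (fun x => u x * w (x + t • v)) := by
      apply Continuous.integrable_of_hasCompactSupport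
        (hucont.mul (hwcont.comp (by continuity)))
      apply HasCompactSupport.mul_left
      exact (hwc.comp_homeomorph (Homeomorph.addRight (t • v)))
    have i2 : Integrable (fun x => u x * w x) :=
      ((hwcont.mul hucont).integrable_of_hasCompactSupport hwc.mul_right).congr
        (Eventually.of_forall fun x => mul_comm _ _)
    have i3 : Integrable (fun x => u (x - t • v) * w x) := by
      apply Continuous.integrable_of_hasCompactSupport
        ((hucont.comp (by continuity)).mul hwcont)
      exact hwc.mul_left
    calc ∫ x, u x * ((w (x + t • v) - w x) / t)
        = ∫ x, ((u x * w (x + t • v)) - u x * w x) * t⁻¹ := by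
          congr 1; ext x; field_simp
      _ = ((∫ x, u x * w (x + t • v)) - ∫ x, u x * w x) * t⁻¹ := by
          rw [← integral_sub i1 i2, ← integral_mul_const]
      _ = ((∫ x, u (x - t • v) * w x) - ∫ x, u x * w x) * t⁻¹ := by rw [hshift]
      _ = ∫ x, ((u (x - t • v) - u x) / t) * w x := by
          rw [← integral_sub i3 i2, ← integral_mul_const]
          congr 1; ext x; field_simp
  set K : Set (EuclideanSpace ℝ (Fin m)) := Metric.cthickening ‖v‖ (tsupport w) with hK
  have hKc : IsCompact K := hwc.cthickening
  have T1 : Tendsto (fun t : ℝ => ∫ x, u x * ((w (x + t • v) - w x) / t)) (𝓝[≠] (0:ℝ))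
      (𝓝 (∫ x, u x * (fderiv ℝ w x v))) := by
    apply tendsto_integral_filter_of_dominated_convergence
      (K.indicator fun x => |u x| * (Lw * ‖v‖))
    · filter_upwards with t
      have : Continuous fun x : EuclideanSpace ℝ (Fin m) => u x * ((w (x + t • v) - w x) / t) := by
        apply hucont.mul
        exact ((hwcont.comp (continuous_id.add continuous_const)).sub hwcont).div_const t
      exact this.aestronglyMeasurable
    · have h1 : ∀ᶠ t : ℝ in 𝓝[≠] (0:ℝ), |t| ≤ 1 := by
        apply eventually_nhdsWithin_of_eventually_nhds
        have : Tendsto (fun t : ℝ => |t|) (𝓝 0) (𝓝 |(0:ℝ)|) := continuous_abs.tendsto 0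
        simpa using this.eventually_le_const (by norm_num)
      filter_upwards [h1] with t ht
      filter_upwards with x
      have hwd : |w (x + t • v) - w x| ≤ Lw * (|t| * ‖v‖) := by
        have := hLw.dist_le_mul (x + t • v) x
        simpa [Real.dist_eq, dist_eq_norm, norm_smul] using this
      by_cases hx : x ∈ K
      · rw [Set.indicator_of_mem hx]
        rcases eq_or_ne t 0 with rfl | ht0
        · simp; positivity
        · rw [Real.norm_eq_abs, abs_mul, abs_div]
          have habs : |w (x + t • v) - w x| / |t| ≤ Lw * ‖v‖ := by
            rw [div_le_iff₀ (abs_pos.2 ht0)]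
            calc |w (x + t • v) - w x| ≤ ↑Lw * (|t| * ‖v‖) := hwd
              _ = ↑Lw * ‖v‖ * |t| := by ring
          calc |u x| * (|w (x + t • v) - w x| / |t|) ≤ |u x| * (Lw * ‖v‖) :=
                mul_le_mul_of_nonneg_left habs (abs_nonneg _)
            _ = |u x| * (↑Lw * ‖v‖) := by ring
      · rw [Set.indicator_of_notMem hx]
        have hxK : ∀ s : ℝ, |s| ≤ 1 → x + s • v ∉ tsupport w := by
          intro s hs hmem
          apply hx
          apply Metric.mem_cthickening_of_dist_le x (x + s • v) _ _ hmem
          rw [dist_eq_norm]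
          have : ‖x - (x + s • v)‖ = |s| * ‖v‖ := by
            simp [norm_smul]
          rw [this]
          calc |s| * ‖v‖ ≤ 1 * ‖v‖ := by
                apply mul_le_mul_of_nonneg_right hs (norm_nonneg v)
            _ = ‖v‖ := one_mul _
        have h0 : w x = 0 := by
          have := hxK 0 (by norm_num)
          simp only [zero_smul, add_zero] at this
          exact image_eq_zero_of_notMem_tsupport this
        have h1' : w (x + t • v) = 0 :=
          image_eq_zero_of_notMem_tsupport (hxK t ht)
        simp [h0, h1']
    · exact (hucont.abs.mul continuous_const).continuousOn.integrableOn_compact hKc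
        |>.integrable_indicator hKc.isClosed.measurableSet
    · filter_upwards with x
      have hc : HasDerivAt (fun s : ℝ => x + s • v) v 0 := by
        simpa using ((hasDerivAt_id (0:ℝ)).smul_const v).const_add x
      have hq : HasDerivAt (fun s : ℝ => w (x + s • v)) (fderiv ℝ w x v) 0 := by
        have hd : HasFDerivAt w (fderiv ℝ w x) (x + (0:ℝ) • v) := by
          simpa using ((hw.differentiable (by simp)) x).hasFDerivAt
        exact hd.comp_hasDerivAt 0 hc
      have := hasDerivAt_iff_tendsto_slope.1 hq
      apply Tendsto.const_mul (u x)
      apply this.congr'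
      filter_upwards with t
      show slope (fun s : ℝ => w (x + s • v)) 0 t = (w (x + t • v) - w x) / t
      simp [slope_def_field]
  have T2 : Tendsto (fun t : ℝ => ∫ x, ((u (x - t • v) - u x) / t) * w x) (𝓝[≠] (0:ℝ))
      (𝓝 (∫ x, (-(fderiv ℝ u x v)) * w x)) := by
    apply tendsto_integral_filter_of_dominated_convergence
      (fun x => (Lu * ‖v‖) * |w x|)
    · filter_upwards with t
      have : Continuous fun x : EuclideanSpace ℝ (Fin m) => ((u (x - t • v) - u x) / t) * w x :=
        (((hucont.comp (continuous_id.sub continuous_const)).sub hucont).div_const t).mul hwcont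
      exact this.aestronglyMeasurable
    · filter_upwards with t
      filter_upwards with x
      rw [Real.norm_eq_abs, abs_mul]
      apply mul_le_mul_of_nonneg_right _ (abs_nonneg _)
      rcases eq_or_ne t 0 with rfl | ht0
      · simp; positivity
      · rw [abs_div, div_le_iff₀ (abs_pos.2 ht0)]
        calc |u (x - t • v) - u x| ≤ Lu * dist (x - t • v) x := by
              simpa [Real.dist_eq] using hu.dist_le_mul (x - t • v) x
          _ = Lu * ‖v‖ * |t| := by
              rw [dist_eq_norm]
              have : x - t • v - x = -(t • v) := by abel
              rw [this, norm_neg, norm_smul, Real.norm_eq_abs]; ring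
    · exact ((hwcont.abs.integrable_of_hasCompactSupport hwc.abs).const_mul _)
    · filter_upwards [hu.ae_differentiableAt (μ := volume)] with x hx
      apply Tendsto.mul_const (w x)
      have hc : HasDerivAt (fun s : ℝ => x + s • (-v)) (-v) 0 := by
        simpa using ((hasDerivAt_id (0:ℝ)).smul_const (-v)).const_add x
      have hq : HasDerivAt (fun s : ℝ => u (x + s • (-v))) (-(fderiv ℝ u x v)) 0 := by
        have hd : HasFDerivAt u (fderiv ℝ u x) (x + (0:ℝ) • (-v)) := by
          simpa using hx.hasFDerivAt
        have := hd.comp_hasDerivAt 0 hc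
        simpa [Function.comp_def] using this
      have := hasDerivAt_iff_tendsto_slope.1 hq
      apply this.congr'
      filter_upwards with t
      show slope (fun s : ℝ => u (x + s • (-v))) 0 t = (u (x - t • v) - u x) / t
      simp [slope_def_field, sub_eq_add_neg]
  have heq : (fun t : ℝ => ∫ x, u x * ((w (x + t • v) - w x) / t))
      =ᶠ[𝓝[≠] (0:ℝ)] fun t => ∫ x, ((u (x - t • v) - u x) / t) * w x := by
    filter_upwards [self_mem_nhdsWithin] with t ht
    exact key t ht
  have hfinal : ∫ x, u x * (fderiv ℝ w x v) = ∫ x, (-(fderiv ℝ u x v)) * w x :=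
    tendsto_nhds_unique (T1.congr' heq) T2
  have : ∫ x, (-(fderiv ℝ u x v)) * w x = - ∫ x, (fderiv ℝ u x v) * w x := by
    rw [← integral_neg]; simp [neg_mul]
  rw [this] at hfinal
  linarith

end ByParts

section Cancel
variable {n : ℕ}

local notation "E⟮⟯" => EuclideanSpace ℝ (Fin (n + 1))

/-- The key pointwise cancellation: the alternating sum over permutations of the
derivative of the product of the `g`-gradient entries vanishes, by symmetry of
second derivatives. -/
theorem perm_cancel (G : Fin n → EuclideanSpace ℝ (Fin (n + 1)) → ℝ)
    (hGs : ∀ i, ContDiff ℝ ∞ (G i)) (x : EuclideanSpace ℝ (Fin (n + 1))) :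
    ∑ σ : Equiv.Perm (Fin (n + 1)), ((Equiv.Perm.sign σ : ℤ) : ℝ) *
      fderiv ℝ (fun y => ∏ i : Fin n,
        fderiv ℝ (G i) y (EuclideanSpace.single (σ i.succ) 1)) x
        (EuclideanSpace.single (σ 0) 1) = 0 := by
  classical
  set e : Fin (n + 1) → E⟮⟯ := fun j => EuclideanSpace.single j 1 with he
  set D2 : Fin n → E⟮⟯ →L[ℝ] E⟮⟯ →L[ℝ] ℝ := fun i => fderiv ℝ (fderiv ℝ (G i)) x with hD2
  have hdG : ∀ i, Differentiable ℝ (fderiv ℝ (G i)) :=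
    fun i => ((hGs i).fderiv_right my_inf_add_one_le).differentiable (by simp)
  have hsym : ∀ i u v, D2 i u v = D2 i v u := by
    intro i u v
    exact ((hGs i).contDiffAt.isSymmSndFDerivAt (by rw [minSmoothness_of_isRCLikeNormedField]; exact my_two_le_inf)).eq u v
  -- derivative of the product
  have step1 : ∀ σ : Equiv.Perm (Fin (n + 1)),
      fderiv ℝ (fun y => ∏ i : Fin n, fderiv ℝ (G i) y (e (σ i.succ))) x (e (σ 0))
      = ∑ i : Fin n, (∏ k ∈ Finset.univ.erase i, fderiv ℝ (G k) x (e (σ k.succ))) *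
          (D2 i (e (σ 0)) (e (σ i.succ))) := by
    intro σ
    have hder : ∀ i ∈ (Finset.univ : Finset (Fin n)), HasFDerivAt
        (fun y => fderiv ℝ (G i) y (e (σ i.succ)))
        ((ContinuousLinearMap.apply ℝ ℝ (e (σ i.succ))).comp (D2 i)) x := by
      intro i _
      exact (ContinuousLinearMap.apply ℝ ℝ (e (σ i.succ))).hasFDerivAt.comp x
        ((hdG i) x).hasFDerivAt
    have := (HasFDerivAt.finset_prod hder).fderiv
    rw [this]
    simp only [ContinuousLinearMap.sum_apply, ContinuousLinearMap.smul_apply,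
      ContinuousLinearMap.comp_apply, ContinuousLinearMap.apply_apply, smul_eq_mul]
  change ∑ σ : Equiv.Perm (Fin (n + 1)), ((Equiv.Perm.sign σ : ℤ) : ℝ) *
    fderiv ℝ (fun y => ∏ i : Fin n, fderiv ℝ (G i) y (e (σ i.succ))) x (e (σ 0)) = 0
  simp only [step1, Finset.mul_sum]
  rw [Finset.sum_comm]
  apply Finset.sum_eq_zero
  intro i _
  apply Finset.sum_involution (fun σ _ => σ * Equiv.swap 0 i.succ)
  · intro σ _
    have h0 : (σ * Equiv.swap (0 : Fin (n+1)) i.succ) 0 = σ i.succ := by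
      simp [Equiv.Perm.mul_apply, Equiv.swap_apply_left]
    have hi : (σ * Equiv.swap (0 : Fin (n+1)) i.succ) i.succ = σ 0 := by
      simp [Equiv.Perm.mul_apply, Equiv.swap_apply_right]
    have hk : ∀ k ∈ Finset.univ.erase i,
        (fderiv ℝ (G k) x) (e ((σ * Equiv.swap (0 : Fin (n+1)) i.succ) k.succ))
        = (fderiv ℝ (G k) x) (e (σ k.succ)) := by
      intro k hk'
      have hki : k ≠ i := Finset.ne_of_mem_erase hk'
      rw [Equiv.Perm.mul_apply,
        Equiv.swap_apply_of_ne_of_ne (Fin.succ_ne_zero k)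
          (fun h => hki (Fin.succ_injective _ h))]
    have hsign : ((Equiv.Perm.sign (σ * Equiv.swap (0 : Fin (n+1)) i.succ) : ℤ) : ℝ)
        = -((Equiv.Perm.sign σ : ℤ) : ℝ) := by
      rw [Equiv.Perm.sign_mul, Equiv.Perm.sign_swap (Fin.succ_ne_zero i).symm]
      push_cast
      ring
    rw [h0, hi, Finset.prod_congr rfl hk, hsign, hsym i]
    ring
  · intro σ _ _ hEq
    have hτ : Equiv.swap (0 : Fin (n+1)) i.succ = 1 :=
      mul_left_cancel (a := σ) (by rw [mul_one]; exact hEq)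
    have h0' : Equiv.swap (0 : Fin (n+1)) i.succ 0 = i.succ := Equiv.swap_apply_left _ _
    rw [hτ] at h0'
    exact Fin.succ_ne_zero i h0'.symm
  · intro σ _; exact Finset.mem_univ _
  · intro σ _; rw [mul_assoc, Equiv.swap_mul_self, mul_one]

end Cancel

section Smooth

/-- The main statement in the case where the `gᵢ` are smooth (and Lipschitz). -/
theorem smooth_case {n : ℕ} {f : EuclideanSpace ℝ (Fin (n + 1)) → ℝ} {Lf : NNReal}
    (hf : LipschitzWith Lf f)
    {G : Fin n → EuclideanSpace ℝ (Fin (n + 1)) → ℝ}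
    (hGs : ∀ i, ContDiff ℝ ∞ (G i))
    {φ : EuclideanSpace ℝ (Fin (n + 1)) → ℝ}
    (hφ : ContDiff ℝ ∞ φ) (hφc : HasCompactSupport φ) :
    ∫ x, φ x * Matrix.det (Matrix.of fun i j : Fin (n + 1) =>
        Fin.cases (fderiv ℝ f x (EuclideanSpace.single j 1))
          (fun i' => fderiv ℝ (G i') x (EuclideanSpace.single j 1)) i)
      = - ∫ x, f x * Matrix.det (Matrix.of fun i j : Fin (n + 1) =>
          Fin.cases (fderiv ℝ φ x (EuclideanSpace.single j 1))
            (fun i' => fderiv ℝ (G i') x (EuclideanSpace.single j 1)) i) := by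
  classical
  set e : Fin (n + 1) → EuclideanSpace ℝ (Fin (n + 1)) :=
    fun j => EuclideanSpace.single j 1 with he
  set P : Equiv.Perm (Fin (n + 1)) → EuclideanSpace ℝ (Fin (n + 1)) → ℝ :=
    fun σ x => ∏ i : Fin n, fderiv ℝ (G i) x (e (σ i.succ)) with hP
  have hPs : ∀ σ, ContDiff ℝ ∞ (P σ) := by
    intro σ
    apply my_contDiff_prod
    intro i _
    exact ((hGs i).fderiv_right my_inf_add_one_le).clm_apply contDiff_const
  have hws : ∀ σ, ContDiff ℝ ∞ (fun x => φ x * P σ x) := fun σ => hφ.mul (hPs σ)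
  have hwc : ∀ σ, HasCompactSupport (fun x => φ x * P σ x) := fun σ => hφc.mul_right
  have hfmeas : ∀ j, AEStronglyMeasurable (fun x => fderiv ℝ f x (e j)) volume :=
    fun j => (measurable_fderiv_apply_const ℝ f (e j)).aestronglyMeasurable
  have hfbdd : ∀ j, ∀ x, ‖fderiv ℝ f x (e j)‖ ≤ (Lf : ℝ) := by
    intro j x
    calc ‖fderiv ℝ f x (e j)‖ ≤ ‖fderiv ℝ f x‖ * ‖e j‖ := (fderiv ℝ f x).le_opNorm _
      _ ≤ (Lf : ℝ) * 1 := by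
          apply mul_le_mul (norm_fderiv_le_of_lipschitz ℝ hf) _ (norm_nonneg _) Lf.coe_nonneg
          rw [he]; rw [EuclideanSpace.norm_single]; simp
      _ = (Lf : ℝ) := mul_one _
  -- integrability of the pieces
  have int1 : ∀ σ : Equiv.Perm (Fin (n + 1)),
      Integrable (fun x => fderiv ℝ f x (e (σ 0)) * (φ x * P σ x)) := by
    intro σ
    exact ((hφ.continuous.mul (hPs σ).continuous).integrable_of_hasCompactSupport
      (hwc σ)).bdd_mul (hfmeas _) (Eventually.of_forall (hfbdd _))
  have hdφ : ∀ j, ContDiff ℝ ∞ (fun x => fderiv ℝ φ x (e j)) :=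
    fun j => (hφ.fderiv_right my_inf_add_one_le).clm_apply contDiff_const
  have hdφc : ∀ j, HasCompactSupport (fun x => fderiv ℝ φ x (e j)) := by
    intro j
    exact (hφc.fderiv (𝕜 := ℝ)).comp_left (g := fun L : EuclideanSpace ℝ (Fin (n+1)) →L[ℝ] ℝ => L (e j)) rfl
  have int2 : ∀ σ : Equiv.Perm (Fin (n + 1)),
      Integrable (fun x => f x * (fderiv ℝ φ x (e (σ 0)) * P σ x)) := by
    intro σ
    apply Continuous.integrable_of_hasCompactSupport
    · exact hf.continuous.mul ((hdφ _).continuous.mul (hPs σ).continuous)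
    · exact ((hdφc (σ 0)).mul_right).mul_left
  have int3 : ∀ σ : Equiv.Perm (Fin (n + 1)),
      Integrable (fun x => f x * (φ x * fderiv ℝ (P σ) x (e (σ 0)))) := by
    intro σ
    apply Continuous.integrable_of_hasCompactSupport
    · exact hf.continuous.mul (hφ.continuous.mul
        (ContDiff.continuous (n := ∞)
          (((hPs σ).fderiv_right my_inf_add_one_le).clm_apply contDiff_const)))
    · exact (hφc.mul_right).mul_left
  -- Step 1 : expansion of the LHS
  have e1 : ∫ x, φ x * Matrix.det (Matrix.of fun i j : Fin (n + 1) =>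
        Fin.cases (fderiv ℝ f x (e j)) (fun i' => fderiv ℝ (G i') x (e j)) i)
      = ∑ σ : Equiv.Perm (Fin (n + 1)), ((Equiv.Perm.sign σ : ℤ) : ℝ) *
          ∫ x, fderiv ℝ f x (e (σ 0)) * (φ x * P σ x) := by
    rw [show (fun x => φ x * Matrix.det (Matrix.of fun i j : Fin (n + 1) =>
        Fin.cases (fderiv ℝ f x (e j)) (fun i' => fderiv ℝ (G i') x (e j)) i))
      = fun x => ∑ σ : Equiv.Perm (Fin (n + 1)), ((Equiv.Perm.sign σ : ℤ) : ℝ) *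
          (fderiv ℝ f x (e (σ 0)) * (φ x * P σ x)) from
      funext fun x => det_expand _ _ _]
    rw [integral_finset_sum _ (fun σ _ => (int1 σ).const_mul _)]
    exact Finset.sum_congr rfl fun σ _ => integral_const_mul _ _
  -- Step 2 : integrate by parts in each term
  have e2 : ∀ σ : Equiv.Perm (Fin (n + 1)),
      ∫ x, fderiv ℝ f x (e (σ 0)) * (φ x * P σ x)
      = - ∫ x, f x * fderiv ℝ (fun y => φ y * P σ y) x (e (σ 0)) :=
    fun σ => lip_int_by_parts hf (hws σ) (hwc σ) _
  -- Step 3 : product rule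
  have e3 : ∀ σ : Equiv.Perm (Fin (n + 1)), ∀ x,
      f x * fderiv ℝ (fun y => φ y * P σ y) x (e (σ 0))
      = f x * (fderiv ℝ φ x (e (σ 0)) * P σ x)
        + f x * (φ x * fderiv ℝ (P σ) x (e (σ 0))) := by
    intro σ x
    rw [fderiv_fun_mul (hφ.differentiable (by simp) x) ((hPs σ).differentiable (by simp) x)]
    simp only [ContinuousLinearMap.add_apply, ContinuousLinearMap.smul_apply, smul_eq_mul]
    ring
  have e4 : ∀ σ : Equiv.Perm (Fin (n + 1)),
      ∫ x, f x * fderiv ℝ (fun y => φ y * P σ y) x (e (σ 0))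
      = (∫ x, f x * (fderiv ℝ φ x (e (σ 0)) * P σ x))
        + ∫ x, f x * (φ x * fderiv ℝ (P σ) x (e (σ 0))) := by
    intro σ
    rw [show (fun x => f x * fderiv ℝ (fun y => φ y * P σ y) x (e (σ 0)))
      = fun x => f x * (fderiv ℝ φ x (e (σ 0)) * P σ x)
        + f x * (φ x * fderiv ℝ (P σ) x (e (σ 0))) from funext (e3 σ)]
    exact integral_add (int2 σ) (int3 σ)
  -- reassemble the first sum as the RHS determinant integral
  have e5 : ∫ x, f x * Matrix.det (Matrix.of fun i j : Fin (n + 1) =>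
        Fin.cases (fderiv ℝ φ x (e j)) (fun i' => fderiv ℝ (G i') x (e j)) i)
      = ∑ σ : Equiv.Perm (Fin (n + 1)), ((Equiv.Perm.sign σ : ℤ) : ℝ) *
          ∫ x, f x * (fderiv ℝ φ x (e (σ 0)) * P σ x) := by
    rw [show (fun x => f x * Matrix.det (Matrix.of fun i j : Fin (n + 1) =>
        Fin.cases (fderiv ℝ φ x (e j)) (fun i' => fderiv ℝ (G i') x (e j)) i))
      = fun x => ∑ σ : Equiv.Perm (Fin (n + 1)), ((Equiv.Perm.sign σ : ℤ) : ℝ) *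
          (f x * (fderiv ℝ φ x (e (σ 0)) * P σ x)) from
      funext fun x => by
        rw [det_expand (fun j => fderiv ℝ φ x (e j)) _ (f x)]
        exact Finset.sum_congr rfl fun σ _ => by ring]
    rw [integral_finset_sum _ (fun σ _ => (int2 σ).const_mul _)]
    exact Finset.sum_congr rfl fun σ _ => integral_const_mul _ _
  -- the second sum vanishes
  have e6 : ∑ σ : Equiv.Perm (Fin (n + 1)), ((Equiv.Perm.sign σ : ℤ) : ℝ) *
      ∫ x, f x * (φ x * fderiv ℝ (P σ) x (e (σ 0))) = 0 := by
    have := integral_finset_sum (μ := volume) Finset.univ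
      (f := fun (σ : Equiv.Perm (Fin (n + 1))) x => ((Equiv.Perm.sign σ : ℤ) : ℝ) *
        (f x * (φ x * fderiv ℝ (P σ) x (e (σ 0)))))
      (fun σ _ => (int3 σ).const_mul _)
    rw [show (∑ σ : Equiv.Perm (Fin (n + 1)), ((Equiv.Perm.sign σ : ℤ) : ℝ) *
        ∫ x, f x * (φ x * fderiv ℝ (P σ) x (e (σ 0))))
      = ∑ σ : Equiv.Perm (Fin (n + 1)), ∫ x, ((Equiv.Perm.sign σ : ℤ) : ℝ) *
        (f x * (φ x * fderiv ℝ (P σ) x (e (σ 0)))) from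
      Finset.sum_congr rfl fun σ _ => (integral_const_mul _ _).symm]
    rw [← this]
    rw [show (fun x => ∑ σ : Equiv.Perm (Fin (n + 1)), ((Equiv.Perm.sign σ : ℤ) : ℝ) *
        (f x * (φ x * fderiv ℝ (P σ) x (e (σ 0))))) = fun _ => (0:ℝ) from funext fun x => ?_]
    · exact integral_zero _ _
    · have hc := perm_cancel G hGs x
      calc ∑ σ : Equiv.Perm (Fin (n + 1)), ((Equiv.Perm.sign σ : ℤ) : ℝ) *
            (f x * (φ x * fderiv ℝ (P σ) x (e (σ 0))))
          = (f x * φ x) * ∑ σ : Equiv.Perm (Fin (n + 1)), ((Equiv.Perm.sign σ : ℤ) : ℝ) *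
              fderiv ℝ (P σ) x (e (σ 0)) := by
            rw [Finset.mul_sum]
            exact Finset.sum_congr rfl fun σ _ => by ring
        _ = 0 := by rw [hP]; rw [hc]; ring
  -- put everything together
  rw [e1, e5]
  calc ∑ σ : Equiv.Perm (Fin (n + 1)), ((Equiv.Perm.sign σ : ℤ) : ℝ) *
        ∫ x, fderiv ℝ f x (e (σ 0)) * (φ x * P σ x)
      = ∑ σ : Equiv.Perm (Fin (n + 1)), ((Equiv.Perm.sign σ : ℤ) : ℝ) *
        (-(∫ x, f x * (fderiv ℝ φ x (e (σ 0)) * P σ x))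
          - ∫ x, f x * (φ x * fderiv ℝ (P σ) x (e (σ 0)))) := by
        refine Finset.sum_congr rfl fun σ _ => ?_
        rw [e2 σ, e4 σ]; ring
    _ = (∑ σ : Equiv.Perm (Fin (n + 1)), -(((Equiv.Perm.sign σ : ℤ) : ℝ) *
          ∫ x, f x * (fderiv ℝ φ x (e (σ 0)) * P σ x)))
        - ∑ σ : Equiv.Perm (Fin (n + 1)), ((Equiv.Perm.sign σ : ℤ) : ℝ) *
          ∫ x, f x * (φ x * fderiv ℝ (P σ) x (e (σ 0))) := by
        rw [← Finset.sum_sub_distrib]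
        exact Finset.sum_congr rfl fun σ _ => by ring
    _ = - ∑ σ : Equiv.Perm (Fin (n + 1)), ((Equiv.Perm.sign σ : ℤ) : ℝ) *
          ∫ x, f x * (fderiv ℝ φ x (e (σ 0)) * P σ x) := by
        rw [e6, sub_zero, Finset.sum_neg_distrib]

end Smooth

section Conv

/-- The directional derivative of a convolution-type integral against a Lipschitz
function is obtained by differentiating the Lipschitz factor under the integral. -/
theorem conv_fderiv {m : ℕ} {g : EuclideanSpace ℝ (Fin m) → ℝ} {Lg : NNReal}
    (hg : LipschitzWith Lg g)
    {k : EuclideanSpace ℝ (Fin m) → ℝ} (hk : ContDiff ℝ ∞ k) (hkc : HasCompactSupport k)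
    {F : EuclideanSpace ℝ (Fin m) → ℝ} (hF : ∀ y, F y = ∫ t, k t * g (y - t))
    (x : EuclideanSpace ℝ (Fin m)) (hFd : DifferentiableAt ℝ F x)
    (v : EuclideanSpace ℝ (Fin m)) :
    fderiv ℝ F x v = ∫ t, k t * fderiv ℝ g (x - t) v := by
  have hkcont := hk.continuous
  have hgcont := hg.continuous
  have hmp : MeasurePreserving (fun t : EuclideanSpace ℝ (Fin m) => x - t) volume volume := by
    have h1 := MeasureTheory.Measure.measurePreserving_neg
      (volume : Measure (EuclideanSpace ℝ (Fin m)))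
    have h2 := measurePreserving_add_left (volume : Measure (EuclideanSpace ℝ (Fin m))) x
    simpa [Function.comp_def, sub_eq_add_neg] using h2.comp h1
  have hint : ∀ y : EuclideanSpace ℝ (Fin m), Integrable (fun t => k t * g (y - t)) := by
    intro y
    apply Continuous.integrable_of_hasCompactSupport
      (hkcont.mul (hgcont.comp (continuous_const.sub continuous_id)))
    exact hkc.mul_right
  -- the directional difference quotient identity
  have key : ∀ s : ℝ, s ≠ 0 → (F (x + s • v) - F x) / s
      = ∫ t, k t * ((g (x - t + s • v) - g (x - t)) / s) := by
    intro s hs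
    rw [hF, hF, div_eq_mul_inv, ← integral_sub (hint (x + s • v)) (hint x),
      ← integral_mul_const]
    congr 1
    ext t
    have : x + s • v - t = x - t + s • v := by abel
    rw [this]
    field_simp
  -- limit of the difference quotients, by dominated convergence
  have T : Tendsto (fun s : ℝ => ∫ t, k t * ((g (x - t + s • v) - g (x - t)) / s))
      (𝓝[≠] (0:ℝ)) (𝓝 (∫ t, k t * fderiv ℝ g (x - t) v)) := by
    apply tendsto_integral_filter_of_dominated_convergence (fun t => |k t| * (Lg * ‖v‖))
    · filter_upwards with s
      have : Continuous fun t : EuclideanSpace ℝ (Fin m) =>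
          k t * ((g (x - t + s • v) - g (x - t)) / s) := by
        apply hkcont.mul
        apply Continuous.div_const
        exact ((hgcont.comp (by continuity)).sub (hgcont.comp (by continuity)))
      exact this.aestronglyMeasurable
    · filter_upwards with s
      filter_upwards with t
      rw [Real.norm_eq_abs, abs_mul]
      apply mul_le_mul_of_nonneg_left _ (abs_nonneg _)
      rcases eq_or_ne s 0 with rfl | hs0
      · simp; positivity
      · rw [abs_div, div_le_iff₀ (abs_pos.2 hs0)]
        calc |g (x - t + s • v) - g (x - t)| ≤ Lg * dist (x - t + s • v) (x - t) := by
              simpa [Real.dist_eq] using hg.dist_le_mul (x - t + s • v) (x - t)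
          _ = Lg * ‖v‖ * |s| := by
              rw [dist_eq_norm]
              have : x - t + s • v - (x - t) = s • v := by abel
              rw [this, norm_smul, Real.norm_eq_abs]; ring
    · exact (hkcont.abs.integrable_of_hasCompactSupport hkc.abs).mul_const _
    · filter_upwards [hmp.quasiMeasurePreserving.ae
        (hg.ae_differentiableAt (μ := volume))] with t ht
      apply Tendsto.const_mul (k t)
      have hc : HasDerivAt (fun s : ℝ => x - t + s • v) v 0 := by
        simpa using ((hasDerivAt_id (0:ℝ)).smul_const v).const_add (x - t)
      have hq : HasDerivAt (fun s : ℝ => g (x - t + s • v)) (fderiv ℝ g (x - t) v) 0 := by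
        have hd : HasFDerivAt g (fderiv ℝ g (x - t)) (x - t + (0:ℝ) • v) := by
          simpa using ht.hasFDerivAt
        exact hd.comp_hasDerivAt 0 hc
      have := hasDerivAt_iff_tendsto_slope.1 hq
      apply this.congr'
      filter_upwards with s
      show slope (fun r : ℝ => g (x - t + r • v)) 0 s = (g (x - t + s • v) - g (x - t)) / s
      simp [slope_def_field]
  -- the line derivative of `F` itself
  have hline : HasDerivAt (fun s : ℝ => F (x + s • v)) (fderiv ℝ F x v) 0 := by
    have hc : HasDerivAt (fun s : ℝ => x + s • v) v 0 := by
      simpa using ((hasDerivAt_id (0:ℝ)).smul_const v).const_add x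
    have hd : HasFDerivAt F (fderiv ℝ F x) (x + (0:ℝ) • v) := by
      simpa using hFd.hasFDerivAt
    exact hd.comp_hasDerivAt 0 hc
  have hslope := hasDerivAt_iff_tendsto_slope.1 hline
  have hslope' : Tendsto (fun s : ℝ => ∫ t, k t * ((g (x - t + s • v) - g (x - t)) / s))
      (𝓝[≠] (0:ℝ)) (𝓝 (fderiv ℝ F x v)) := by
    apply hslope.congr'
    filter_upwards [self_mem_nhdsWithin] with s hs
    rw [show slope (fun r : ℝ => F (x + r • v)) 0 s = (F (x + s • v) - F x) / s by
      simp [slope_def_field], key s hs]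
  exact tendsto_nhds_unique hslope' T

end Conv
section Final

/-- The weak exterior derivative of the Lipschitz `n`-form
`ω = f dg₁ ∧ ⋯ ∧ dgₙ` on `ℝ^{n+1}` is `df ∧ dg₁ ∧ ⋯ ∧ dgₙ`: for every smooth
compactly supported test function `φ`,
`∫ φ · (df ∧ dg₁ ∧ ⋯ ∧ dgₙ) = −∫ dφ ∧ ω`.  In coordinates, the `(n+1)`-forms
are identified with the determinants of the matrices whose rows are the
(a.e. defined) gradients of `f` (resp. `φ`) and of the `gᵢ`. -/
theorem stmt_7 {n : ℕ} (f : EuclideanSpace ℝ (Fin (n + 1)) → ℝ)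
    (g : Fin n → EuclideanSpace ℝ (Fin (n + 1)) → ℝ)
    (Lf : NNReal) (hf : LipschitzWith Lf f)
    (Lg : Fin n → NNReal) (hg : ∀ i, LipschitzWith (Lg i) (g i))
    (φ : EuclideanSpace ℝ (Fin (n + 1)) → ℝ)
    (hφ : ContDiff ℝ (⊤ : ℕ∞) φ) (hφc : HasCompactSupport φ) :
    ∫ x, φ x * Matrix.det (Matrix.of fun i j : Fin (n + 1) =>
        Fin.cases (fderiv ℝ f x (EuclideanSpace.single j 1))
          (fun i' => fderiv ℝ (g i') x (EuclideanSpace.single j 1)) i)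
      = - ∫ x, f x * Matrix.det (Matrix.of fun i j : Fin (n + 1) =>
          Fin.cases (fderiv ℝ φ x (EuclideanSpace.single j 1))
            (fun i' => fderiv ℝ (g i') x (EuclideanSpace.single j 1)) i) := by
  classical
  have hphiinf : ContDiff ℝ ∞ φ := hφ.of_le (by simp)
  obtain ⟨Lφ, hφl⟩ : ∃ C, LipschitzWith C φ :=
    hφ.lipschitzWith_of_hasCompactSupport hφc (by simp)
  -- the mollifiers
  set bump : ℕ → ContDiffBump (0 : EuclideanSpace ℝ (Fin (n + 1))) := fun k =>
    ⟨((k : ℝ) + 1)⁻¹, 2 * ((k : ℝ) + 1)⁻¹,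
      by positivity,
      by nlinarith [inv_pos.2 (show (0:ℝ) < (k : ℝ) + 1 by positivity)]⟩ with hbump
  set ker : ℕ → EuclideanSpace ℝ (Fin (n + 1)) → ℝ := fun k => (bump k).normed volume
    with hkerdef
  have hkers : ∀ k, ContDiff ℝ ∞ (ker k) := fun k => (bump k).contDiff_normed
  have hkerc : ∀ k, HasCompactSupport (ker k) := fun k => (bump k).hasCompactSupport_normed
  have hkern : ∀ k t, 0 ≤ ker k t := fun k t => (bump k).nonneg_normed t
  have hgloc : ∀ i, LocallyIntegrable (g i) volume :=
    fun i => (hg i).continuous.locallyIntegrable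
  -- the mollified functions
  set G : ℕ → Fin n → EuclideanSpace ℝ (Fin (n + 1)) → ℝ :=
    fun k i => (ker k) ⋆[ContinuousLinearMap.lsmul ℝ ℝ, volume] (g i) with hGdef
  have hGeq : ∀ k i x, G k i x = ∫ t, ker k t * g i (x - t) := by
    intro k i x
    simp only [hGdef, convolution_def, ContinuousLinearMap.lsmul_apply, smul_eq_mul]
  have hGs : ∀ k i, ContDiff ℝ ∞ (G k i) := fun k i =>
    HasCompactSupport.contDiff_convolution_left _ (hkerc k) (hkers k) (hgloc i)
  -- mollification preserves the Lipschitz bound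
  have hGlip : ∀ k i, LipschitzWith (Lg i) (G k i) := by
    intro k i
    apply LipschitzWith.of_dist_le_mul
    intro x y
    have hix : ∀ z, Integrable (fun t => ker k t * g i (z - t)) := by
      intro z
      apply Continuous.integrable_of_hasCompactSupport
        ((hkers k).continuous.mul ((hg i).continuous.comp (continuous_const.sub continuous_id)))
      exact (hkerc k).mul_right
    rw [Real.dist_eq, hGeq, hGeq, ← integral_sub (hix x) (hix y)]
    have : ∀ t, ker k t * g i (x - t) - ker k t * g i (y - t)
        = ker k t * (g i (x - t) - g i (y - t)) := fun t => by ring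
    simp only [this]
    calc |∫ t, ker k t * (g i (x - t) - g i (y - t))|
        ≤ ∫ t, ker k t * ((Lg i : ℝ) * dist x y) := by
          rw [← Real.norm_eq_abs]
          apply norm_integral_le_of_norm_le (((bump k).integrable_normed).mul_const _)
          filter_upwards with t
          rw [Real.norm_eq_abs, abs_mul, abs_of_nonneg (hkern k t)]
          apply mul_le_mul_of_nonneg_left _ (hkern k t)
          calc |g i (x - t) - g i (y - t)| ≤ (Lg i : ℝ) * dist (x - t) (y - t) := by
                simpa [Real.dist_eq] using (hg i).dist_le_mul (x - t) (y - t)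
            _ = (Lg i : ℝ) * dist x y := by rw [dist_sub_right]
      _ = (Lg i : ℝ) * dist x y := by
          rw [integral_mul_const, (bump k).integral_normed, one_mul]
  -- the derivative of the mollification is the mollification of the derivative
  have hGfd : ∀ k i x j, fderiv ℝ (G k i) x (EuclideanSpace.single j 1)
      = ∫ t, ker k t * fderiv ℝ (g i) (x - t) (EuclideanSpace.single j 1) := by
    intro k i x j
    exact conv_fderiv (hg i) (hkers k) (hkerc k) (hGeq k i) x
      (((hGs k i).differentiable (by simp)) x) _
  have hconv_eq : ∀ k i (j : Fin (n + 1)) x,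
      ((ker k) ⋆[ContinuousLinearMap.lsmul ℝ ℝ, volume]
        (fun y => fderiv ℝ (g i) y (EuclideanSpace.single j 1))) x
      = ∫ t, ker k t * fderiv ℝ (g i) (x - t) (EuclideanSpace.single j 1) := by
    intro k i j x
    simp only [convolution_def, ContinuousLinearMap.lsmul_apply, smul_eq_mul]
  -- the a.e. derivatives of the `g i` are locally integrable
  have hloc : ∀ i (j : Fin (n + 1)),
      LocallyIntegrable (fun y => fderiv ℝ (g i) y (EuclideanSpace.single j 1)) volume := by
    intro i j x
    refine ⟨Metric.closedBall x 1, Metric.closedBall_mem_nhds x one_pos, ?_⟩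
    apply Integrable.mono' (g := fun _ => (Lg i : ℝ))
      (integrableOn_const measure_closedBall_lt_top.ne)
      ((measurable_fderiv_apply_const ℝ (g i) _).aestronglyMeasurable.restrict)
    exact Eventually.of_forall fun y => lip_fderiv_bound (hg i) y j
  -- convergence of the mollified derivatives
  have hrOut : Tendsto (fun k => (bump k).rOut) atTop (𝓝 0) := by
    have h2 := tendsto_one_div_add_atTop_nhds_zero_nat.const_mul (2:ℝ)
    simpa [hbump, one_div] using h2
  have hae : ∀ᵐ x : EuclideanSpace ℝ (Fin (n + 1)), ∀ i (j : Fin (n + 1)),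
      Tendsto (fun k => fderiv ℝ (G k i) x (EuclideanSpace.single j 1)) atTop
        (𝓝 (fderiv ℝ (g i) x (EuclideanSpace.single j 1))) := by
    rw [ae_all_iff]
    intro i
    rw [ae_all_iff]
    intro j
    filter_upwards [ContDiffBump.ae_convolution_tendsto_right_of_locallyIntegrable
      (K := 2) hrOut (Eventually.of_forall fun k => le_of_eq rfl) (hloc i j)] with x hx
    have : (fun k => fderiv ℝ (G k i) x (EuclideanSpace.single j 1))
        = fun k => ((ker k) ⋆[ContinuousLinearMap.lsmul ℝ ℝ, volume]
            (fun y => fderiv ℝ (g i) y (EuclideanSpace.single j 1))) x :=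
      funext fun k => by rw [hGfd, hconv_eq]
    rw [this]
    exact hx
  -- the matrices
  set A : ℕ → EuclideanSpace ℝ (Fin (n + 1)) → Matrix (Fin (n + 1)) (Fin (n + 1)) ℝ :=
    fun k x => Matrix.of fun i j : Fin (n + 1) =>
      Fin.cases (fderiv ℝ f x (EuclideanSpace.single j 1))
        (fun i' => fderiv ℝ (G k i') x (EuclideanSpace.single j 1)) i with hA
  set B : ℕ → EuclideanSpace ℝ (Fin (n + 1)) → Matrix (Fin (n + 1)) (Fin (n + 1)) ℝ :=
    fun k x => Matrix.of fun i j : Fin (n + 1) =>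
      Fin.cases (fderiv ℝ φ x (EuclideanSpace.single j 1))
        (fun i' => fderiv ℝ (G k i') x (EuclideanSpace.single j 1)) i with hB
  set A' : EuclideanSpace ℝ (Fin (n + 1)) → Matrix (Fin (n + 1)) (Fin (n + 1)) ℝ :=
    fun x => Matrix.of fun i j : Fin (n + 1) =>
      Fin.cases (fderiv ℝ f x (EuclideanSpace.single j 1))
        (fun i' => fderiv ℝ (g i') x (EuclideanSpace.single j 1)) i with hA'
  set B' : EuclideanSpace ℝ (Fin (n + 1)) → Matrix (Fin (n + 1)) (Fin (n + 1)) ℝ :=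
    fun x => Matrix.of fun i j : Fin (n + 1) =>
      Fin.cases (fderiv ℝ φ x (EuclideanSpace.single j 1))
        (fun i' => fderiv ℝ (g i') x (EuclideanSpace.single j 1)) i with hB'
  -- the smooth case applies for each `k`
  have hsm : ∀ k, ∫ x, φ x * (A k x).det = - ∫ x, f x * (B k x).det :=
    fun k => smooth_case hf (fun i => hGs k i) hphiinf hφc
  -- measurability
  have hGdcont : ∀ k i (j : Fin (n + 1)),
      Continuous fun x => fderiv ℝ (G k i) x (EuclideanSpace.single j 1) := by
    intro k i j
    exact ContDiff.continuous (n := ∞)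
      (((hGs k i).fderiv_right my_inf_add_one_le).clm_apply contDiff_const)
  have hAmeas : ∀ k, Measurable fun x => (A k x).det := by
    intro k
    apply det_meas
    intro i j
    refine Fin.cases ?_ ?_ i
    · simpa [hA] using measurable_fderiv_apply_const ℝ f (EuclideanSpace.single j 1)
    · intro i'
      simpa [hA] using (hGdcont k i' j).measurable
  have hBmeas : ∀ k, Measurable fun x => (B k x).det := by
    intro k
    apply det_meas
    intro i j
    refine Fin.cases ?_ ?_ i
    · simpa [hB] using measurable_fderiv_apply_const ℝ φ (EuclideanSpace.single j 1)
    · intro i'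
      simpa [hB] using (hGdcont k i' j).measurable
  -- bounds
  set CA : ℝ := (Finset.univ : Finset (Equiv.Perm (Fin (n + 1)))).card *
    ∏ i : Fin (n + 1), (Fin.cases (Lf : ℝ) (fun i' => (Lg i' : ℝ)) i) with hCA
  set CB : ℝ := (Finset.univ : Finset (Equiv.Perm (Fin (n + 1)))).card *
    ∏ i : Fin (n + 1), (Fin.cases (Lφ : ℝ) (fun i' => (Lg i' : ℝ)) i) with hCB
  have hcApos : ∀ i : Fin (n + 1), 0 ≤ (Fin.cases (Lf : ℝ) (fun i' => (Lg i' : ℝ)) i : ℝ) := by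
    intro i
    refine Fin.cases ?_ ?_ i
    · simpa using Lf.coe_nonneg
    · intro i'; simpa using (Lg i').coe_nonneg
  have hcBpos : ∀ i : Fin (n + 1), 0 ≤ (Fin.cases (Lφ : ℝ) (fun i' => (Lg i' : ℝ)) i : ℝ) := by
    intro i
    refine Fin.cases ?_ ?_ i
    · simpa using Lφ.coe_nonneg
    · intro i'; simpa using (Lg i').coe_nonneg
  have hAbd : ∀ k x, |(A k x).det| ≤ CA := by
    intro k x
    apply det_abs_le _ _ hcApos
    intro i j
    refine Fin.cases ?_ ?_ i
    · simpa [hA] using lip_fderiv_bound hf x j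
    · intro i'
      simpa [hA] using lip_fderiv_bound (hGlip k i') x j
  have hBbd : ∀ k x, |(B k x).det| ≤ CB := by
    intro k x
    apply det_abs_le _ _ hcBpos
    intro i j
    refine Fin.cases ?_ ?_ i
    · simpa [hB] using lip_fderiv_bound hφl x j
    · intro i'
      simpa [hB] using lip_fderiv_bound (hGlip k i') x j
  -- a.e. convergence of the determinants
  have hdettend : ∀ᵐ x : EuclideanSpace ℝ (Fin (n + 1)),
      Tendsto (fun k => (A k x).det) atTop (𝓝 ((A' x).det)) ∧
      Tendsto (fun k => (B k x).det) atTop (𝓝 ((B' x).det)) := by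
    filter_upwards [hae] with x hx
    constructor
    · apply ((Continuous.matrix_det continuous_id).tendsto (A' x)).comp
      refine tendsto_pi_nhds.2 ?_
      intro i
      rw [tendsto_pi_nhds]
      intro j
      refine Fin.cases ?_ ?_ i
      · simpa [hA, hA'] using tendsto_const_nhds
      · intro i'
        simpa [hA, hA'] using hx i' j
    · apply ((Continuous.matrix_det continuous_id).tendsto (B' x)).comp
      refine tendsto_pi_nhds.2 ?_
      intro i
      rw [tendsto_pi_nhds]
      intro j
      refine Fin.cases ?_ ?_ i
      · simpa [hB, hB'] using tendsto_const_nhds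
      · intro i'
        simpa [hB, hB'] using hx i' j
  -- limit of the left-hand sides
  have TA : Tendsto (fun k => ∫ x, φ x * (A k x).det) atTop (𝓝 (∫ x, φ x * (A' x).det)) := by
    apply tendsto_integral_of_dominated_convergence (fun x => |φ x| * CA)
    · exact fun k => (hφ.continuous.measurable.mul (hAmeas k)).aestronglyMeasurable
    · exact (hφ.continuous.abs.integrable_of_hasCompactSupport hφc.abs).mul_const _
    · intro k
      filter_upwards with x
      rw [Real.norm_eq_abs, abs_mul]
      exact mul_le_mul_of_nonneg_left (hAbd k x) (abs_nonneg _)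
    · filter_upwards [hdettend] with x hx
      exact (hx.1.const_mul (φ x))
  -- limit of the right-hand sides
  have hSc : IsCompact (tsupport (fderiv ℝ φ)) := hφc.fderiv (𝕜 := ℝ)
  have TB : Tendsto (fun k => ∫ x, f x * (B k x).det) atTop (𝓝 (∫ x, f x * (B' x).det)) := by
    apply tendsto_integral_of_dominated_convergence
      ((tsupport (fderiv ℝ φ)).indicator fun x => |f x| * CB)
    · exact fun k => (hf.continuous.measurable.mul (hBmeas k)).aestronglyMeasurable
    · exact ((hf.continuous.abs.mul continuous_const).continuousOn.integrableOn_compact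
        hSc).integrable_indicator hSc.isClosed.measurableSet
    · intro k
      filter_upwards with x
      by_cases hx : x ∈ tsupport (fderiv ℝ φ)
      · rw [Set.indicator_of_mem hx, Real.norm_eq_abs, abs_mul]
        exact mul_le_mul_of_nonneg_left (hBbd k x) (abs_nonneg _)
      · rw [Set.indicator_of_notMem hx]
        have hz : fderiv ℝ φ x = 0 := image_eq_zero_of_notMem_tsupport hx
        have hdet0 : (B k x).det = 0 := by
          apply Matrix.det_eq_zero_of_row_eq_zero 0
          intro j
          simp [hB, hz]
        rw [hdet0, mul_zero]
        simp
    · filter_upwards [hdettend] with x hx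
      exact (hx.2.const_mul (f x))
  -- conclusion
  have TB' : Tendsto (fun k => ∫ x, φ x * (A k x).det) atTop (𝓝 (- ∫ x, f x * (B' x).det)) := by
    rw [show (fun k => ∫ x, φ x * (A k x).det) = fun k => - ∫ x, f x * (B k x).det from
      funext hsm]
    exact TB.neg
  exact tendsto_nhds_unique TA TB'

end Final
end

section
/- Let f₁, …, fₙ : ℝⁿ → ℝ be Lipschitz and suppose the support of f₁ (or of the whole product expression) is compact. Then ∫_{ℝⁿ} det(∂fᵢ/∂xⱼ) dx = 0 provided f₁ has compact support. -/
/-!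
For smooth `g` the Jacobian determinant is a divergence:
`det (∂ⱼ gᵢ) = ∑_σ sign σ · ∂_{σ i₀} (g_{i₀} · ∏_{i ≠ i₀} ∂_{σ i} gᵢ)`, because the terms carrying a
second derivative `∂_{σ i₀} ∂_{σ k} g_k` cancel in pairs `σ`, `σ ∘ (i₀ k)` by symmetry of the
Hessian. When `g_{i₀}` has compact support, every summand integrates to zero.

A Lipschitz `f` is replaced by mollifications `φₖ ⋆ f`. By Rademacher's theorem their derivatives
are `φₖ ⋆ Df`, bounded by the Lipschitz constant and converging to `Df` almost everywhere
(Lebesgue differentiation); the determinants vanish off a fixed compact set, so dominated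
convergence transfers the vanishing of the integral to `f`.
-/

open MeasureTheory Filter Function ContinuousLinearMap Metric Set Equiv
open scoped Topology NNReal Convolution Pointwise

theorem Equiv.Perm.sum_sign_mul_eq_zero_of_mul_swap {ι R : Type*} [Fintype ι] [DecidableEq ι]
    [CommRing R] {T : Perm ι → R} {a b : ι} (hab : a ≠ b)
    (hT : ∀ σ, T (σ * swap a b) = T σ) :
    ∑ σ : Perm ι, ((Perm.sign σ : ℤ) : R) * T σ = 0 :=
  Finset.sum_involution (fun σ _ => σ * swap a b)
    (fun σ _ => by simp [hT, Perm.sign_swap hab])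
    (fun σ _ _ => (not_congr mul_swap_eq_iff).mpr hab) (fun _ _ => Finset.mem_univ _)
    fun σ _ => mul_swap_involutive a b σ

section Smooth

variable {ι E : Type*} [DecidableEq ι] [NormedAddCommGroup E] [NormedSpace ℝ E] {g : ι → E → ℝ}

theorem fderiv_mul_prod_fderiv_apply (hg : ∀ i, ContDiff ℝ 2 (g i)) (i₀ : ι) (s : Finset ι)
    (w : ι → E) (x y : E) :
    fderiv ℝ (fun z => g i₀ z * ∏ i ∈ s, fderiv ℝ (g i) z (w i)) x y
      = fderiv ℝ (g i₀) x y * ∏ i ∈ s, fderiv ℝ (g i) x (w i)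
        + g i₀ x * ∑ k ∈ s, (∏ i ∈ s.erase k, fderiv ℝ (g i) x (w i))
            * fderiv ℝ (fderiv ℝ (g k)) x y (w k) := by
  have hpartial : ∀ k, HasFDerivAt (fun z => fderiv ℝ (g k) z (w k))
      ((apply ℝ ℝ (w k)).comp (fderiv ℝ (fderiv ℝ (g k)) x)) x := fun k =>
    (apply ℝ ℝ (w k)).hasFDerivAt.comp x
      (((hg k).fderiv_right (m := 1) le_rfl).differentiable one_ne_zero x).hasFDerivAt
  have hprod := ((hg i₀).differentiable two_ne_zero x).hasFDerivAt.fun_mul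
    (HasFDerivAt.finsetProd (u := s) fun k _ => hpartial k)
  rw [hprod.fderiv]
  simp only [add_apply, smul_apply, sum_apply, ContinuousLinearMap.comp_apply, apply_apply,
    smul_eq_mul, Finset.mul_sum, mul_comm]
  exact add_comm _ _

theorem det_fderiv_eq_sum_sign_mul_fderiv [Fintype ι] (hg : ∀ i, ContDiff ℝ 2 (g i)) (i₀ : ι)
    (v : ι → E) (x : E) :
    (Matrix.of fun i j => fderiv ℝ (g i) x (v j)).det
      = ∑ σ : Perm ι, ((Perm.sign σ : ℤ) : ℝ) * fderiv ℝ
          (fun y => g i₀ y * ∏ i ∈ Finset.univ.erase i₀, fderiv ℝ (g i) y (v (σ i)))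
          x (v (σ i₀)) := by
  have hcancel : ∀ k ≠ i₀, ∑ σ : Perm ι, ((Perm.sign σ : ℤ) : ℝ) *
      ((∏ i ∈ (Finset.univ.erase i₀).erase k, fderiv ℝ (g i) x (v (σ i)))
        * fderiv ℝ (fderiv ℝ (g k)) x (v (σ i₀)) (v (σ k))) = 0 := by
    intro k hk
    refine Perm.sum_sign_mul_eq_zero_of_mul_swap hk.symm fun σ => ?_
    have hprod : ∏ i ∈ (Finset.univ.erase i₀).erase k, fderiv ℝ (g i) x (v ((σ * swap i₀ k) i))
        = ∏ i ∈ (Finset.univ.erase i₀).erase k, fderiv ℝ (g i) x (v (σ i)) :=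
      Finset.prod_congr rfl fun i hi => by
        rw [Perm.mul_apply, swap_apply_of_ne_of_ne
          (Finset.ne_of_mem_erase (Finset.mem_of_mem_erase hi)) (Finset.ne_of_mem_erase hi)]
    rw [hprod, Perm.mul_apply, Perm.mul_apply, swap_apply_left, swap_apply_right,
      ((hg k).contDiffAt.isSymmSndFDerivAt (by simp)).eq]
  have hdet : (Matrix.of fun i j => fderiv ℝ (g i) x (v j)).det = ∑ σ : Perm ι,
      ((Perm.sign σ : ℤ) : ℝ) * (fderiv ℝ (g i₀) x (v (σ i₀))
        * ∏ i ∈ Finset.univ.erase i₀, fderiv ℝ (g i) x (v (σ i))) := by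
    rw [← Matrix.det_transpose, Matrix.det_apply']
    refine Finset.sum_congr rfl fun σ _ => ?_
    rw [Finset.mul_prod_erase _ (fun i => fderiv ℝ (g i) x (v (σ i))) (Finset.mem_univ i₀)]
    rfl
  simp_rw [fderiv_mul_prod_fderiv_apply hg, mul_add, Finset.sum_add_distrib, Finset.mul_sum]
  rw [Finset.sum_comm (s := Finset.univ), Finset.sum_eq_zero (s := Finset.univ.erase i₀),
    add_zero, hdet]
  intro k hk
  simp_rw [mul_left_comm _ (g i₀ x)]
  rw [← Finset.mul_sum, hcancel k (Finset.ne_of_mem_erase hk), mul_zero]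

variable [MeasurableSpace E] [BorelSpace E]

theorem integrable_fderiv_apply_of_hasCompactSupport {F : Type*} [NormedAddCommGroup F]
    [NormedSpace ℝ F] (μ : Measure E) [IsFiniteMeasureOnCompacts μ] {u : E → F}
    (hu : ContDiff ℝ 1 u) (hsupp : HasCompactSupport u) (w : E) :
    Integrable (fun x => fderiv ℝ u x w) μ :=
  ((hu.continuous_fderiv one_ne_zero).clm_apply continuous_const).integrable_of_hasCompactSupport
    ((hsupp.fderiv ℝ).comp_left (g := fun A : E →L[ℝ] F => A w) rfl)

variable [FiniteDimensional ℝ E] (μ : Measure E) [μ.IsAddHaarMeasure]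

theorem integral_fderiv_apply_eq_zero {F : Type*} [NormedAddCommGroup F] [NormedSpace ℝ F]
    {u : E → F} (hu : ContDiff ℝ 1 u) (hsupp : HasCompactSupport u) (w : E) :
    ∫ x, fderiv ℝ u x w ∂μ = 0 := by
  simpa using integral_smul_fderiv_eq_neg_fderiv_smul_of_integrable (μ := μ)
    (f := fun _ : E => (1 : ℝ)) (g := u) (v := w) (by simp)
    (by simpa using integrable_fderiv_apply_of_hasCompactSupport μ hu hsupp w)
    (by simpa using hu.continuous.integrable_of_hasCompactSupport hsupp)
    (fun _ _ => differentiableAt_const _) (fun x _ => (hu.differentiable one_ne_zero) x)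

theorem integral_det_fderiv_eq_zero_of_contDiff [Fintype ι] (hg : ∀ i, ContDiff ℝ 2 (g i))
    {i₀ : ι} (hsupp : HasCompactSupport (g i₀)) (v : ι → E) :
    ∫ x, (Matrix.of fun i j => fderiv ℝ (g i) x (v j)).det ∂μ = 0 := by
  have hflux : ∀ σ : Perm ι, ContDiff ℝ 1
      (fun y => g i₀ y * ∏ i ∈ Finset.univ.erase i₀, fderiv ℝ (g i) y (v (σ i))) := fun σ =>
    ((hg i₀).of_le one_le_two).mul
      (contDiff_prod fun i _ => ((hg i).fderiv_right le_rfl).clm_apply contDiff_const)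
  simp_rw [det_fderiv_eq_sum_sign_mul_fderiv hg i₀ v]
  rw [integral_finsetSum _ fun σ _ =>
    (integrable_fderiv_apply_of_hasCompactSupport μ (hflux σ) hsupp.mul_right _).const_mul _]
  refine Finset.sum_eq_zero fun σ _ => ?_
  rw [integral_const_mul, integral_fderiv_apply_eq_zero μ (hflux σ) hsupp.mul_right, mul_zero]

end Smooth

noncomputable def shrinkingBump (E : Type*) [NormedAddCommGroup E] [NormedSpace ℝ E] (k : ℕ) :
    ContDiffBump (0 : E) where
  rIn := 1 / (k + 1) / 2
  rOut := 1 / (k + 1)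
  rIn_pos := by positivity
  rIn_lt_rOut := half_lt_self (by positivity)

section Mollification

variable {E F : Type*} [NormedAddCommGroup E] [NormedSpace ℝ E] [MeasurableSpace E]
  [BorelSpace E] [FiniteDimensional ℝ E] [NormedAddCommGroup F] [NormedSpace ℝ F]
  {μ : Measure E} [μ.IsAddHaarMeasure]

theorem ContDiffBump.support_normed_convolution_subset (φ : ContDiffBump (0 : E)) (g : E → F) :
    support (φ.normed μ ⋆[lsmul ℝ ℝ, μ] g) ⊆ thickening φ.rOut (support g) := by
  rw [← ball_add_zero, ← φ.support_normed_eq (μ := μ)]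
  exact support_convolution_subset (L := lsmul ℝ ℝ) (μ := μ)

theorem tsupport_shrinkingBump_convolution_subset (k : ℕ) (g : E → F) :
    tsupport ((shrinkingBump E k).normed μ ⋆[lsmul ℝ ℝ, μ] g) ⊆ cthickening 1 (tsupport g) :=
  closure_minimal (((shrinkingBump E k).support_normed_convolution_subset g).trans
    ((thickening_subset_cthickening_of_le
      (show (shrinkingBump E k).rOut ≤ 1 from div_le_one_of_le₀ (by simp) (by positivity)) _).trans
      (cthickening_subset_of_subset 1 (subset_tsupport _)))) isClosed_cthickening

variable [FiniteDimensional ℝ F] {f : E → F} {L : ℝ≥0}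

theorem LipschitzWith.hasFDerivAt_convolution_right (hf : LipschitzWith L f) {ρ : E → ℝ}
    (hρ : Continuous ρ) (hρs : HasCompactSupport ρ) (x₀ : E) :
    HasFDerivAt (ρ ⋆[lsmul ℝ ℝ, μ] f) ((ρ ⋆[lsmul ℝ ℝ, μ] fderiv ℝ f) x₀) x₀ := by
  have hdiff : ∀ᵐ t ∂μ, DifferentiableAt ℝ f (x₀ - t) :=
    (quasiMeasurePreserving_sub_left_of_right_invariant μ x₀).ae hf.ae_differentiableAt
  have hρi : Integrable ρ μ := hρ.integrable_of_hasCompactSupport hρs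
  have hcont : ∀ x, Continuous fun t => ρ t • f (x - t) := fun x =>
    hρ.smul (hf.continuous.comp (continuous_const.sub continuous_id))
  refine (hasFDerivAt_integral_of_dominated_loc_of_lip' (F := fun x t => ρ t • f (x - t))
    (F' := fun t => ρ t • fderiv ℝ f (x₀ - t)) (bound := fun t => L * ‖ρ t‖) univ_mem
    (fun x _ => (hcont x).aestronglyMeasurable)
    ((hcont x₀).integrable_of_hasCompactSupport hρs.smul_right)
    (hρi.aestronglyMeasurable.smul
      ((measurable_fderiv ℝ f).comp (measurable_const.sub measurable_id)).aestronglyMeasurable)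
    (Eventually.of_forall fun t x _ => ?_) (hρi.norm.const_mul _) ?_).2
  · rw [← smul_sub, norm_smul, mul_comm (L : ℝ), mul_assoc]
    gcongr
    simpa using hf.norm_sub_le (x - t) (x₀ - t)
  · filter_upwards [hdiff] with t ht
    exact ((ht.hasFDerivAt.comp x₀ ((hasFDerivAt_id x₀).sub_const t)).const_smul (ρ t)).congr_fderiv
      (by ext; simp)

theorem LipschitzWith.fderiv_normed_convolution (hf : LipschitzWith L f)
    (φ : ContDiffBump (0 : E)) :
    fderiv ℝ (φ.normed μ ⋆[lsmul ℝ ℝ, μ] f) = φ.normed μ ⋆[lsmul ℝ ℝ, μ] fderiv ℝ f :=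
  funext fun x =>
    (hf.hasFDerivAt_convolution_right φ.continuous_normed φ.hasCompactSupport_normed x).fderiv

theorem LipschitzWith.norm_fderiv_normed_convolution_le (hf : LipschitzWith L f)
    (φ : ContDiffBump (0 : E)) (x : E) : ‖fderiv ℝ (φ.normed μ ⋆[lsmul ℝ ℝ, μ] f) x‖ ≤ L := by
  rw [hf.fderiv_normed_convolution, ← dist_zero_right]
  exact dist_convolution_le L.2 φ.support_normed_eq.subset φ.nonneg_normed φ.integral_normed
    (measurable_fderiv ℝ f).aestronglyMeasurable
    fun y _ => by simpa using norm_fderiv_le_of_lipschitz ℝ hf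

theorem LipschitzWith.ae_tendsto_fderiv_normed_convolution (hf : LipschitzWith L f) {ι : Type*}
    {φ : ι → ContDiffBump (0 : E)} {l : Filter ι} {K : ℝ}
    (hφ : Tendsto (fun i => (φ i).rOut) l (𝓝 0)) (h'φ : ∀ᶠ i in l, (φ i).rOut ≤ K * (φ i).rIn) :
    ∀ᵐ x ∂μ, Tendsto (fun i => fderiv ℝ ((φ i).normed μ ⋆[lsmul ℝ ℝ, μ] f) x) l
      (𝓝 (fderiv ℝ f x)) := by
  simp_rw [hf.fderiv_normed_convolution]
  exact ContDiffBump.ae_convolution_tendsto_right_of_locallyIntegrable hφ h'φ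
    ((locallyIntegrable_const (L : ℝ)).mono (measurable_fderiv ℝ f).aestronglyMeasurable
      (Eventually.of_forall fun x => by simpa using norm_fderiv_le_of_lipschitz ℝ hf))

theorem LipschitzWith.ae_tendsto_fderiv_shrinkingBump_convolution (hf : LipschitzWith L f) :
    ∀ᵐ x ∂μ, Tendsto (fun k => fderiv ℝ ((shrinkingBump E k).normed μ ⋆[lsmul ℝ ℝ, μ] f) x)
      atTop (𝓝 (fderiv ℝ f x)) :=
  hf.ae_tendsto_fderiv_normed_convolution tendsto_one_div_add_atTop_nhds_zero_nat (K := 2)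
    (Eventually.of_forall fun k => le_of_eq (by simp only [shrinkingBump]; ring))

end Mollification

theorem tendsto_integral_det_of_dominated {ι X : Type*} [Fintype ι] [DecidableEq ι]
    [TopologicalSpace X] [T2Space X] [MeasurableSpace X] [OpensMeasurableSpace X] {μ : Measure X}
    [IsFiniteMeasureOnCompacts μ] {A : ℕ → X → Matrix ι ι ℝ} {A' : X → Matrix ι ι ℝ} {K : Set X}
    {C : ℝ} (hK : IsCompact K) (hA : ∀ k, Continuous (A k)) (hC : ∀ k x i j, |A k x i j| ≤ C)
    (hvanish : ∀ k, ∀ x ∉ K, (A k x).det = 0)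
    (hlim : ∀ᵐ x ∂μ, Tendsto (fun k => A k x) atTop (𝓝 (A' x))) :
    Tendsto (fun k => ∫ x, (A k x).det ∂μ) atTop (𝓝 (∫ x, (A' x).det ∂μ)) := by
  refine tendsto_integral_of_dominated_convergence
    (K.indicator fun _ => (Fintype.card ι).factorial • C ^ Fintype.card ι)
    (fun k => (hA k).matrix_det.aestronglyMeasurable)
    ((integrable_indicator_iff hK.measurableSet).2 (integrableOn_const hK.measure_lt_top.ne))
    (fun k => Eventually.of_forall fun x => ?_)
    (hlim.mono fun x hx => (continuous_id.matrix_det.tendsto _).comp hx)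
  by_cases hx : x ∈ K
  · rw [indicator_of_mem hx]
    exact Matrix.det_le (abv := AbsoluteValue.abs) (hC k x)
  · rw [indicator_of_notMem hx, hvanish k x hx, norm_zero]

theorem integral_det_fderiv_eq_zero_of_lipschitzWith {ι E : Type*} [Fintype ι] [DecidableEq ι]
    [NormedAddCommGroup E] [NormedSpace ℝ E] [MeasurableSpace E] [BorelSpace E]
    [FiniteDimensional ℝ E] (μ : Measure E) [μ.IsAddHaarMeasure] {f : ι → E → ℝ} {L : ι → ℝ≥0}
    (hf : ∀ i, LipschitzWith (L i) (f i)) {i₀ : ι} (hsupp : HasCompactSupport (f i₀))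
    (v : ι → E) :
    ∫ x, (Matrix.of fun i j => fderiv ℝ (f i) x (v j)).det ∂μ = 0 := by
  set g : ℕ → ι → E → ℝ := fun k i => (shrinkingBump E k).normed μ ⋆[lsmul ℝ ℝ, μ] f i
  have hg : ∀ k i, ContDiff ℝ 2 (g k i) := fun k i =>
    (shrinkingBump E k).hasCompactSupport_normed.contDiff_convolution_left _
      (shrinkingBump E k).contDiff_normed (hf i).continuous.locallyIntegrable
  have hK : IsCompact (cthickening 1 (tsupport (f i₀))) := hsupp.cthickening
  have hgK : ∀ k, tsupport (g k i₀) ⊆ cthickening 1 (tsupport (f i₀)) := fun k =>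
    tsupport_shrinkingBump_convolution_subset k (f i₀)
  have hbound : ∀ k x i j, |fderiv ℝ (g k i) x (v j)| ≤ (∑ i, (L i : ℝ)) * ∑ j, ‖v j‖ :=
    fun k x i j => calc
      |fderiv ℝ (g k i) x (v j)| ≤ ‖fderiv ℝ (g k i) x‖ * ‖v j‖ :=
        (Real.norm_eq_abs _).symm.trans_le (le_opNorm _ _)
      _ ≤ L i * ‖v j‖ := by gcongr; exact (hf i).norm_fderiv_normed_convolution_le _ x
      _ ≤ (∑ i, (L i : ℝ)) * ∑ j, ‖v j‖ :=
        mul_le_mul (Finset.single_le_sum (fun i _ => (L i).2) (Finset.mem_univ i))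
          (Finset.single_le_sum (fun j _ => norm_nonneg _) (Finset.mem_univ j)) (norm_nonneg _)
          (Finset.sum_nonneg fun i _ => (L i).2)
  have hlim := tendsto_integral_det_of_dominated (μ := μ)
    (A := fun k x => Matrix.of fun i j => fderiv ℝ (g k i) x (v j)) hK
    (fun k => continuous_pi fun i => continuous_pi fun j =>
      ((hg k i).continuous_fderiv two_ne_zero).clm_apply continuous_const) hbound
    (fun k x hx => Matrix.det_eq_zero_of_row_eq_zero i₀ fun j => by
      simp [fderiv_of_notMem_tsupport ℝ fun h => hx (hgK k h)])
    (by
      filter_upwards [ae_all_iff.2 fun i => (hf i).ae_tendsto_fderiv_shrinkingBump_convolution]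
        with x hx
      exact tendsto_pi_nhds.2 fun i => tendsto_pi_nhds.2 fun j =>
        ((continuous_id.clm_apply continuous_const).tendsto _).comp (hx i))
  simp_rw [integral_det_fderiv_eq_zero_of_contDiff μ (hg _) (hK.of_isClosed_subset
    (isClosed_tsupport _) (hgK _)) v] at hlim
  exact tendsto_nhds_unique hlim tendsto_const_nhds

/-- Coordinate form of `∫ df₁ ∧ ⋯ ∧ dfₙ = 0`: if `f₁, …, fₙ : ℝⁿ → ℝ` are
Lipschitz and `f₁` has compact support, then the integral over `ℝⁿ` of the
a.e. defined Jacobian determinant `det(∂fᵢ/∂xⱼ)` vanishes. -/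
theorem stmt_11 {n : ℕ} [NeZero n] (f : Fin n → EuclideanSpace ℝ (Fin n) → ℝ)
    (L : Fin n → NNReal) (hf : ∀ i, LipschitzWith (L i) (f i))
    (hsupp : HasCompactSupport (f 0)) :
    ∫ x, Matrix.det (Matrix.of fun i j : Fin n =>
        fderiv ℝ (f i) x (EuclideanSpace.single j 1)) = 0 :=
  integral_det_fderiv_eq_zero_of_lipschitzWith volume hf hsupp _
end

section
/- Let φ : U → V be a C¹-diffeomorphism between open subsets of ℝⁿ and f : V → ℝ Lipschitz. Then f ∘ φ is locally Lipschitz on U, and d(f ∘ φ) = (df ∘ φ) ∘ Dφ almost everywhere on U (chain rule for Lipschitz functions). -/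
open MeasureTheory Set Metric

/-! Local Lipschitz continuity of `f ∘ φ` is inherited from the local Lipschitz continuity of the
`C¹` map `φ`. For the chain rule, Rademacher's theorem makes `f` differentiable off a null set
`B ⊆ V`; the points `x ∈ U` where `f` may fail to be differentiable at `φ x` lie in `ψ '' B`, which
is null because the `C¹` map `ψ` sends null sets to null sets. Everywhere else the classical chain
rule applies. -/

section LocallyLipschitz

variable {𝕂 E F : Type*} [RCLike 𝕂] [NormedAddCommGroup E] [NormedSpace 𝕂 E]
  [NormedAddCommGroup F] [NormedSpace 𝕂 F]

theorem ContDiffOn.locallyLipschitzOn_of_isOpen {f : E → F} {s : Set E}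
    (hf : ContDiffOn 𝕂 1 f s) (hs : IsOpen s) : LocallyLipschitzOn s f := fun x hx ↦ by
  obtain ⟨K, t, ht, hft⟩ := (hf.contDiffAt (hs.mem_nhds hx)).exists_lipschitzOnWith
  exact ⟨K, t, mem_nhdsWithin_of_mem_nhds ht, hft⟩

end LocallyLipschitz

theorem LipschitzOnWith.comp_locallyLipschitzOn {α β γ : Type*} [PseudoEMetricSpace α]
    [PseudoEMetricSpace β] [PseudoEMetricSpace γ] {f : β → γ} {g : α → β} {s : Set α}
    {t : Set β} {K : NNReal} (hf : LipschitzOnWith K f t) (hg : LocallyLipschitzOn s g)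
    (hst : MapsTo g s t) : LocallyLipschitzOn s (f ∘ g) := fun x hx ↦ by
  obtain ⟨K', u, hu, hgu⟩ := hg hx
  exact ⟨K * K', u ∩ s, Filter.inter_mem hu self_mem_nhdsWithin,
    hf.comp (hgu.mono inter_subset_left) fun _ hy ↦ hst hy.2⟩

theorem LocallyLipschitzOn.exists_lipschitzOnWith_ball_inter {α β : Type*} [PseudoMetricSpace α]
    [PseudoEMetricSpace β] {f : α → β} {s : Set α} (hf : LocallyLipschitzOn s f) {x : α}
    (hx : x ∈ s) : ∃ ε > (0 : ℝ), ∃ K : NNReal, LipschitzOnWith K f (ball x ε ∩ s) := by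
  obtain ⟨K, t, ht, hft⟩ := hf hx
  obtain ⟨ε, hε, hεt⟩ := Metric.mem_nhdsWithin_iff.1 ht
  exact ⟨ε, hε, K, hft.mono hεt⟩

section AlmostEverywhere

variable {E F : Type*} [NormedAddCommGroup E] [NormedSpace ℝ E] [FiniteDimensional ℝ E]
  [MeasurableSpace E] [BorelSpace E] {μ : Measure E} [μ.IsAddHaarMeasure]

theorem LipschitzOnWith.ae_differentiableAt_of_isOpen [NormedAddCommGroup F] [NormedSpace ℝ F]
    [FiniteDimensional ℝ F] {f : E → F} {s : Set E} {K : NNReal} (hf : LipschitzOnWith K f s)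
    (hs : IsOpen s) : ∀ᵐ x ∂μ, x ∈ s → DifferentiableAt ℝ f x := by
  filter_upwards [hf.ae_differentiableWithinAt_of_mem] with x hx hxs
  exact (hx hxs).differentiableAt (hs.mem_nhds hxs)

theorem ae_comp_of_leftInvOn {U V : Set E} {φ ψ : E → E} (hψ : DifferentiableOn ℝ ψ V)
    (hφ : MapsTo φ U V) (hψφ : LeftInvOn ψ φ U) {p : E → Prop}
    (hp : ∀ᵐ y ∂μ, y ∈ V → p y) : ∀ᵐ x ∂μ, x ∈ U → p (φ x) := by
  set B := {y ∈ V | ¬ p y}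
  have hB : μ B = 0 := measure_mono_null (fun y (hy : y ∈ B) (hpy : y ∈ V → p y) ↦ hy.2 (hpy hy.1))
    (ae_iff.1 hp)
  have hψB : μ (ψ '' B) = 0 :=
    addHaar_image_eq_zero_of_differentiableOn_of_addHaar_eq_zero μ (hψ.mono (sep_subset _ _)) hB
  filter_upwards [measure_eq_zero_iff_ae_notMem.1 hψB] with x hx hxU
  by_contra hpx
  exact hx ⟨φ x, ⟨hφ hxU, hpx⟩, hψφ hxU⟩

end AlmostEverywhere

theorem stmt_14_general {n : ℕ} (U V : Set (EuclideanSpace ℝ (Fin n)))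
    (hU : IsOpen U) (hV : IsOpen V)
    (φ ψ : EuclideanSpace ℝ (Fin n) → EuclideanSpace ℝ (Fin n))
    (hφ : ContDiffOn ℝ 1 φ U) (hψ : ContDiffOn ℝ 1 ψ V)
    (hφV : Set.MapsTo φ U V)
    (hinv₁ : ∀ x ∈ U, ψ (φ x) = x)
    (f : EuclideanSpace ℝ (Fin n) → ℝ)
    (L : NNReal) (hf : LipschitzOnWith L f V) :
    (∀ x ∈ U, ∃ ε > (0:ℝ), ∃ L' : NNReal,
        LipschitzOnWith L' (f ∘ φ) (Metric.ball x ε ∩ U)) ∧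
    ∀ᵐ x : EuclideanSpace ℝ (Fin n), x ∈ U →
      fderiv ℝ (f ∘ φ) x = (fderiv ℝ f (φ x)).comp (fderiv ℝ φ x) := by
  refine ⟨fun x hx ↦ (hf.comp_locallyLipschitzOn (hφ.locallyLipschitzOn_of_isOpen hU)
    hφV).exists_lipschitzOnWith_ball_inter hx, ?_⟩
  have hfφ : ∀ᵐ x : EuclideanSpace ℝ (Fin n), x ∈ U → DifferentiableAt ℝ f (φ x) :=
    ae_comp_of_leftInvOn (hψ.differentiableOn one_ne_zero) hφV hinv₁
      (hf.ae_differentiableAt_of_isOpen hV)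
  filter_upwards [hfφ] with x hfx hxU
  exact fderiv_comp x (hfx hxU) ((hφ.differentiableOn one_ne_zero).differentiableAt
    (hU.mem_nhds hxU))

/-- Chain rule for Lipschitz functions: if `φ : U → V` is a `C¹`
diffeomorphism between open subsets of `ℝⁿ` (with `C¹` inverse `ψ`) and
`f` is Lipschitz on `V`, then `f ∘ φ` is locally Lipschitz on `U` and
`d(f ∘ φ) = (df ∘ φ) ∘ Dφ` almost everywhere on `U`. -/
theorem stmt_14 {n : ℕ} (U V : Set (EuclideanSpace ℝ (Fin n)))
    (hU : IsOpen U) (hV : IsOpen V)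
    (φ ψ : EuclideanSpace ℝ (Fin n) → EuclideanSpace ℝ (Fin n))
    (hφ : ContDiffOn ℝ 1 φ U) (hψ : ContDiffOn ℝ 1 ψ V)
    (hφV : Set.MapsTo φ U V) (hψU : Set.MapsTo ψ V U)
    (hinv₁ : ∀ x ∈ U, ψ (φ x) = x) (hinv₂ : ∀ y ∈ V, φ (ψ y) = y)
    (f : EuclideanSpace ℝ (Fin n) → ℝ)
    (L : NNReal) (hf : LipschitzOnWith L f V) :
    (∀ x ∈ U, ∃ ε > (0:ℝ), ∃ L' : NNReal,
        LipschitzOnWith L' (f ∘ φ) (Metric.ball x ε ∩ U)) ∧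
    ∀ᵐ x : EuclideanSpace ℝ (Fin n), x ∈ U →
      fderiv ℝ (f ∘ φ) x = (fderiv ℝ f (φ x)).comp (fderiv ℝ φ x) :=
  stmt_14_general U V hU hV φ ψ hφ hψ hφV hinv₁ f L hf
end
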